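/- arXiv:2310.07583 — 2 statements merged into one kernel-verified Lean document; each statement's English description precedes it below -/
import Mathlib

section
/- Let f_i, g_i : ℝ^n → ℝ be convex and continuous for i ∈ I finite, and C ⊆ ℝ^n convex and compact. Then max_{λ ∈ [0,1]^{|I|}} min_{x ∈ C} Σ_i [(1-λ_i) f_i(x) + λ_i g_i(x)] = min_{x ∈ C} Σ_i max{f_i(x), g_i(x)}. -/
/-!
Every value on the left is at most the right-hand side, since `(1 - λᵢ) a + λᵢ b ≤ max a b`;
compactness and continuity make all infima attained. Conversely, `∑ᵢ max (fᵢ, gᵢ)` is the pointwise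
maximum of the `2^|I|` convex functions `hₛ = ∑ᵢ (sᵢ ? gᵢ : fᵢ)`, `s : I → Bool`. If their maximum
is at least `m` on `C`, separating `{y | ∃ x ∈ C, hₛ x ≤ yₛ ∀ s}` from the open orthant `{y < m}`
yields weights `w` in the standard simplex with `∑ₛ wₛ hₛ ≥ m` on `C`. Then `λᵢ`, the total weight
of the `s` that pick `gᵢ`, attains the value `m` on the left.
-/

open Finset

lemma nonneg_of_forall_le_add_mul {a u w : ℝ} (h : ∀ T : ℝ, 0 ≤ T → u ≤ a + T * w) :
    0 ≤ w := by
  by_contra! hw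
  have hua : u ≤ a := by simpa using h 0 le_rfl
  have hT : (a - u + 1) / -w * w = -(a - u + 1) := by
    rw [div_neg, neg_mul, div_mul_cancel₀ _ hw.ne]
  linarith [hT ▸ h ((a - u + 1) / -w) (div_nonneg (by linarith) (by linarith))]

section

variable {E : Type*} [AddCommGroup E] [Module ℝ E] {C : Set E}

lemma convexOn_finset_sum {ι : Type*} (t : Finset ι) {h : ι → E → ℝ} (hC : Convex ℝ C)
    (hh : ∀ i ∈ t, ConvexOn ℝ C (h i)) : ConvexOn ℝ C fun x => ∑ i ∈ t, h i x := by
  refine ⟨hC, fun x hx y hy a b ha hb hab => ?_⟩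
  simp only [smul_eq_mul, mul_sum, ← sum_add_distrib]
  exact sum_le_sum fun i hi => (hh i hi).2 hx hy ha hb hab

section

variable {J : Type*} [Fintype J] {h : J → E → ℝ} {m : ℝ}

lemma exists_nonneg_sum_pos_forall_mul_sum_le (hC : C.Nonempty) (hh : ∀ j, ConvexOn ℝ C (h j))
    (hm : ∀ x ∈ C, ∃ j, m ≤ h j x) :
    ∃ w : J → ℝ, (∀ j, 0 ≤ w j) ∧ 0 < ∑ j, w j ∧
      ∀ x ∈ C, m * ∑ j, w j ≤ ∑ j, w j * h j x := by
  classical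
  obtain ⟨x₀, hx₀⟩ := hC
  obtain ⟨j₀, -⟩ := hm x₀ hx₀
  -- Separate the region above the values `(h j x)_j` from the open orthant below `m`.
  set A : Set (J → ℝ) := {y | ∃ x ∈ C, ∀ j, h j x ≤ y j}
  set B : Set (J → ℝ) := Set.univ.pi fun _ => Set.Iio m
  have hA : Convex ℝ A := by
    rintro y ⟨x, hx, hxy⟩ y' ⟨x', hx', hxy'⟩ a b ha hb hab
    refine ⟨a • x + b • x', (hh j₀).1 hx hx' ha hb hab, fun j => ?_⟩
    calc h j (a • x + b • x') ≤ a * h j x + b * h j x' := (hh j).2 hx hx' ha hb hab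
      _ ≤ a * y j + b * y' j := by gcongr <;> apply_assumption
  have hdisj : Disjoint B A := by
    rw [Set.disjoint_left]
    rintro y hyB ⟨x, hx, hxy⟩
    obtain ⟨j, hj⟩ := hm x hx
    exact (hj.trans (hxy j)).not_gt (hyB j trivial)
  obtain ⟨φ, u, hφB, hφA⟩ := geometric_hahn_banach_open
    (convex_pi fun _ _ => convex_Iio m) (isOpen_set_pi Set.finite_univ fun _ _ => isOpen_Iio)
    hA hdisj
  set w : J → ℝ := fun j => φ (Pi.single j 1)
  have hφ : ∀ y, φ y = ∑ j, w j * y j := fun y => by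
    conv_lhs => rw [← univ_sum_single y]
    rw [map_sum]
    refine sum_congr rfl fun j _ => ?_
    rw [show Pi.single j (y j) = y j • Pi.single j (1 : ℝ) by simp [← Pi.single_smul'],
      map_smul, smul_eq_mul, mul_comm]
  have hφA' : ∀ x ∈ C, u ≤ ∑ j, w j * h j x := fun x hx =>
    hφ (fun j => h j x) ▸ hφA _ ⟨x, hx, fun _ => le_rfl⟩
  have hw : ∀ j, 0 ≤ w j := fun j => nonneg_of_forall_le_add_mul fun T hT => by
    have hmem : (fun i => h i x₀) + T • Pi.single j 1 ∈ A :=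
      ⟨x₀, hx₀, fun i => le_add_of_nonneg_right
        (mul_nonneg hT ((Pi.single_nonneg.2 zero_le_one : (0 : J → ℝ) ≤ Pi.single j 1) i))⟩
    simpa [map_add, map_smul] using hφA _ hmem
  have hS : 0 < ∑ j, w j := by
    refine (sum_nonneg fun j _ => hw j).lt_of_ne fun hS => ?_
    have hw0 : ∀ j, w j = 0 := fun j =>
      (sum_eq_zero_iff_of_nonneg fun j _ => hw j).1 hS.symm j (mem_univ j)
    have := hφB (fun _ => m - 1) fun _ _ => sub_one_lt m
    simp only [hφ, hw0, zero_mul, sum_const_zero] at this hφA'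
    linarith [hφA' x₀ hx₀]
  refine ⟨w, hw, hS, fun x hx => le_of_forall_lt fun c hc => ?_⟩
  have := hφB (fun _ => c / ∑ j, w j) fun _ _ => (div_lt_iff₀ hS).2 hc
  rw [hφ, ← sum_mul, mul_div_cancel₀ _ hS.ne'] at this
  exact this.trans_le (hφA' x hx)

theorem exists_mem_stdSimplex_forall_le_sum_mul (hC : C.Nonempty)
    (hh : ∀ j, ConvexOn ℝ C (h j)) (hm : ∀ x ∈ C, ∃ j, m ≤ h j x) :
    ∃ w ∈ stdSimplex ℝ J, ∀ x ∈ C, m ≤ ∑ j, w j * h j x := by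
  obtain ⟨w, hw, hS, hmS⟩ := exists_nonneg_sum_pos_forall_mul_sum_le hC hh hm
  refine ⟨fun j => w j / ∑ i, w i, ⟨fun j => div_nonneg (hw j) hS.le, by
    rw [← sum_div, div_self hS.ne']⟩, fun x hx => ?_⟩
  simp only [div_mul_eq_mul_div, ← sum_div]
  exact (le_div_iff₀ hS).2 (hmS x hx)

end

variable {I : Type*} [Fintype I]

lemma sum_one_sub_mul_add_mul_le_sum_max (a b : I → ℝ) {lam : I → ℝ}
    (hlam : lam ∈ Set.Icc 0 1) :
    ∑ i, ((1 - lam i) * a i + lam i * b i) ≤ ∑ i, max (a i) (b i) :=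
  sum_le_sum fun i _ => Convex.combo_le_max (a i) (b i) (sub_nonneg.2 (hlam.2 i)) (hlam.1 i)
    (sub_add_cancel 1 (lam i))

lemma sum_mul_sum_cond_eq [DecidableEq I] (a b : I → ℝ) {w : (I → Bool) → ℝ}
    (hw : ∑ s, w s = 1) :
    ∑ s, w s * ∑ i, cond (s i) (b i) (a i) =
      ∑ i, ((1 - ∑ s, cond (s i) (w s) 0) * a i + (∑ s, cond (s i) (w s) 0) * b i) := by
  simp only [mul_sum]
  rw [Finset.sum_comm]
  refine sum_congr rfl fun i _ => ?_
  simp only [← hw, sum_mul, ← sum_sub_distrib, ← sum_add_distrib]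
  refine sum_congr rfl fun s _ => ?_
  cases s i <;> simp

theorem exists_mem_Icc_forall_le_sum_one_sub_mul_add_mul (hC : Convex ℝ C) (hCne : C.Nonempty)
    {f g : I → E → ℝ} (hf : ∀ i, ConvexOn ℝ C (f i)) (hg : ∀ i, ConvexOn ℝ C (g i)) {m : ℝ}
    (hm : ∀ x ∈ C, m ≤ ∑ i, max (f i x) (g i x)) :
    ∃ lam ∈ Set.Icc (0 : I → ℝ) 1, ∀ x ∈ C,
      m ≤ ∑ i, ((1 - lam i) * f i x + lam i * g i x) := by
  classical
  -- `∑ i, max (f i x) (g i x)` is the largest of the sums that pick `f i` or `g i` for each `i`.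
  obtain ⟨w, ⟨hw0, hw1⟩, hwm⟩ := exists_mem_stdSimplex_forall_le_sum_mul
    (h := fun s x => ∑ i, cond (s i) (g i x) (f i x)) hCne
    (fun s => convexOn_finset_sum _ hC fun i _ => by cases s i; exacts [hf i, hg i])
    fun x hx => ⟨fun i => decide (f i x ≤ g i x), by
      simpa [Bool.cond_decide, max_def] using hm x hx⟩
  refine ⟨fun i => ∑ s, cond (s i) (w s) 0, ⟨fun i => sum_nonneg fun s _ => ?_,
    fun i => (sum_le_sum fun s _ => ?_).trans_eq hw1⟩, fun x hx => ?_⟩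
  · cases s i <;> simp [hw0 s]
  · cases s i <;> simp [hw0 s]
  · dsimp only
    rw [← sum_mul_sum_cond_eq _ _ hw1]
    exact hwm x hx

end

/-- Von Neumann–Fan minimax:
`max_{λ ∈ [0,1]^I} min_{x ∈ C} Σ ((1-λ i) f i x + λ i * g i x)
  = min_{x ∈ C} Σ max (f i x) (g i x)`. -/
theorem stmt1 {n : ℕ} {I : Type*} [Fintype I]
    (f g : I → EuclideanSpace ℝ (Fin n) → ℝ)
    (C : Set (EuclideanSpace ℝ (Fin n)))
    (hC : Convex ℝ C) (hCc : IsCompact C) (hCne : C.Nonempty)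
    (hf : ∀ i, ConvexOn ℝ C (f i)) (hg : ∀ i, ConvexOn ℝ C (g i))
    (hfc : ∀ i, Continuous (f i)) (hgc : ∀ i, Continuous (g i)) :
    sSup ((fun lam : I → ℝ =>
        sInf ((fun x => ∑ i, ((1 - lam i) * f i x + lam i * g i x)) '' C)) ''
        Set.Icc 0 1)
      = sInf ((fun x => ∑ i, max (f i x) (g i x)) '' C) := by
  obtain ⟨_, ⟨x₀, hx₀, rfl⟩, hmin⟩ :=
    (hCc.image (by fun_prop : Continuous fun x => ∑ i, max (f i x) (g i x))).exists_isLeast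
      (hCne.image _)
  rw [IsLeast.csInf_eq ⟨Set.mem_image_of_mem _ hx₀, hmin⟩]
  have hle : ∀ lam ∈ Set.Icc (0 : I → ℝ) 1,
      sInf ((fun x => ∑ i, ((1 - lam i) * f i x + lam i * g i x)) '' C) ≤
        ∑ i, max (f i x₀) (g i x₀) := fun lam hlam =>
    (csInf_le ((hCc.image (by fun_prop)).bddBelow) (Set.mem_image_of_mem _ hx₀)).trans
      (sum_one_sub_mul_add_mul_le_sum_max _ _ hlam)
  obtain ⟨lam, hlam, hge⟩ := exists_mem_Icc_forall_le_sum_one_sub_mul_add_mul hC hCne hf hg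
    fun x hx => hmin ⟨x, hx, rfl⟩
  refine IsGreatest.csSup_eq ⟨⟨lam, hlam, (hle lam hlam).antisymm ?_⟩, ?_⟩
  · exact le_csInf (hCne.image _) (Set.forall_mem_image.2 hge)
  · exact Set.forall_mem_image.2 hle
end

section
/- With minimum speed bounds allowed, the convex relaxation can be strictly weaker than the original problem: for h = J = 1, A = +∞, and bounds w_{i−1} ∈ {M}, w_i ∈ [0,1], w_{i+1} ∈ {1} with M sufficiently large, any w feasible for the original problem (with positive jerk constraint w_{i−1} − (2+ρ)w_i + w_{i+1} ≤ 1/√(w_i)) has objective contribution at index i equal to 1/√(w̄_i) where w̄_i < 1 solves 1/√(w̄_i) = M − (2+ρ)w̄_i + 1, while the relaxation admits the feasible choice w_i = 1 with t_i = M − 1 + ρ < 1/√(w̄_i). -/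
set_option maxHeartbeats 800000


/-- minimum-speed-limit counterexample: for `h = J = 1`,
`A = +∞`, bounds `w_{i-1} = M`, `w_i ∈ [0,1]`, `w_{i+1} = 1`, and `M`
sufficiently large, every speed `w_i` feasible for the positive jerk
constraint satisfies `w_i ≤ w̄_i` (hence its objective contribution
`1/√(w_i)` is at least `1/√(w̄_i)`), while the relaxation admits `w_i = 1`
with `t_i = M - 1 + ρ < 1/√(w̄_i)`. -/
theorem stmt18 (ρ : ℝ) (hρ : 0 ≤ ρ) (hρ2 : ρ < 2) :
    ∃ M₀ : ℝ, ∀ M : ℝ, M₀ ≤ M →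
      ∀ wb : ℝ, 0 < wb → wb < 1 →
        1 / Real.sqrt wb = M - (2 + ρ) * wb + 1 →
        ((∀ wi : ℝ, 0 < wi → wi ≤ 1 →
            M - (2 + ρ) * wi + 1 ≤ 1 / Real.sqrt wi →
              wi ≤ wb ∧ 1 / Real.sqrt wb ≤ 1 / Real.sqrt wi) ∧
          M - 1 + ρ < 1 / Real.sqrt wb) := by
  have h2ρ : (0:ℝ) < 2 - ρ := by linarith
  set s : ℝ := Real.sqrt (2 - ρ) with hs
  have hs0 : 0 < s := Real.sqrt_pos.mpr h2ρ
  have hssq : s ^ 2 = 2 - ρ := Real.sq_sqrt h2ρ.le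
  refine ⟨max 6 (3 + 2 / s), fun M hM wb hb0 hb1 hbeq => ?_⟩
  have hM6 : (6:ℝ) ≤ M := le_trans (le_max_left _ _) hM
  have hMs : 3 + 2 / s ≤ M := le_trans (le_max_right _ _) hM
  have hM3 : (0:ℝ) < M - 3 := by linarith
  set b : ℝ := Real.sqrt wb with hbdef
  have hb : 0 < b := Real.sqrt_pos.mpr hb0
  have hbsq : b ^ 2 = wb := Real.sq_sqrt hb0.le
  -- 1/b > M - 3
  have key_b : M - 3 < 1 / b := by
    rw [hbeq]; nlinarith
  have hb_small : b * (M - 3) < 1 := by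
    rw [lt_div_iff₀ hb] at key_b
    nlinarith
  -- equation in terms of b
  have heq' : (M + 1 - (2 + ρ) * b ^ 2) * b = 1 := by
    have : 1 / b = M + 1 - (2 + ρ) * b ^ 2 := by rw [hbeq, hbsq]; ring
    field_simp at this
    linarith [this]
  constructor
  · intro wi hi0 hi1 hcon
    set a : ℝ := Real.sqrt wi with hadef
    have ha : 0 < a := Real.sqrt_pos.mpr hi0
    have hasq : a ^ 2 = wi := Real.sq_sqrt hi0.le
    have hcon' : (M + 1 - (2 + ρ) * a ^ 2) * a ≤ 1 := by
      have h1 : M + 1 - (2 + ρ) * a ^ 2 ≤ 1 / a := by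
        rw [hasq]; linarith [hcon]
      have := (le_div_iff₀ ha).mp h1
      linarith
    have ha1 : a ≤ 1 := by nlinarith [hasq, hi1, ha]
    have ha3 : a ^ 3 ≤ a := by nlinarith [ha1, ha]
    have ha_small : a * (M - 3) < 1 := by
      nlinarith [hcon', ha, ha3,
        mul_pos (show (0:ℝ) < 2 - ρ by linarith) ha,
        mul_le_mul_of_nonneg_left ha3 (show (0:ℝ) ≤ 2 + ρ by linarith)]
    have hab : a ≤ b := by
      by_contra h
      push_neg at h  -- b < a
      -- (a-b)(M+1) ≤ (2+ρ)(a-b)(a²+ab+b²), divide by a-b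
      have hd : 0 < a - b := by linarith
      have h1 : (a - b) * (M + 1) ≤ (2 + ρ) * (a - b) * (a ^ 2 + a * b + b ^ 2) := by
        nlinarith [hcon', heq']
      have h2 : M + 1 ≤ (2 + ρ) * (a ^ 2 + a * b + b ^ 2) :=
        le_of_mul_le_mul_left (by nlinarith [h1]) hd
      -- but a,b < 1/(M-3) ≤ 1/3, so RHS < 4 * 3 * (1/9) = 4/3 < M+1
      have ha13 : 3 * a < 1 := by nlinarith [ha_small, ha]
      have hb13 : 3 * b < 1 := by nlinarith [hb_small, hb]
      nlinarith [h2, ha13, hb13, mul_pos ha hb, sq_nonneg (a - b), ha, hb]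
    have hwib : wi ≤ wb := by rw [← hasq, ← hbsq]; nlinarith
    refine ⟨hwib, ?_⟩
    have : a ≤ b := hab
    exact one_div_le_one_div_of_le ha this
  · -- M - 1 + ρ < 1/√wb
    rw [hbeq]
    -- need (2+ρ) * wb < 2 - ρ
    have hMs' : 2 / s ≤ M - 3 := by linarith
    have h4 : 4 / (2 - ρ) ≤ (M - 3) ^ 2 := by
      have h2s : 2 ≤ (M - 3) * s := by
        rw [div_le_iff₀ hs0] at hMs'
        linarith
      rw [div_le_iff₀ h2ρ, ← hssq]
      nlinarith
    have hwbsmall : wb * (M - 3) ^ 2 < 1 := by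
      rw [← hbsq]
      have h0 : 0 ≤ b * (M - 3) := (mul_pos hb hM3).le
      nlinarith [hb_small, h0]
    have : (2 + ρ) * wb < 2 - ρ := by
      have hwb4 : wb * (4 / (2 - ρ)) < 1 := by
        calc wb * (4 / (2 - ρ)) ≤ wb * (M - 3) ^ 2 := by
              apply mul_le_mul_of_nonneg_left h4 hb0.le
          _ < 1 := hwbsmall
      have hwb4' : wb * 4 / (2 - ρ) < 1 := by rw [mul_div_assoc]; exact hwb4
      rw [div_lt_one h2ρ] at hwb4'
      nlinarith [hwb4', mul_pos hb0 h2ρ]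
    linarith
end
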